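/- arXiv:1405.6564 — 7 statements merged into one kernel-verified Lean document; each statement's English description precedes it below -/
import Mathlib

section
/- Order claim: Let T : ℝ → ℝ be a terrain and let a, b, c, d be real numbers with a < b < c < d. If the point (a, T a) sees (c, T c) and the point (b, T b) sees (d, T d), then (a, T a) sees (d, T d). -/
/-!
Seeing from `P x` to `P y` means every terrain point over `[x, y]` lies below the chord
`P x P y`. Since `B` is below `AC` and `C` is below `BD`, the point `C`, and then `B`, lies below
`AD`. A point over `[a, c]` is below `AC`, hence below `AD` because `C` is; a point over `[c, d]`
is below `BD`, hence below `AD` because `B` is.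
-/

def Sees (T : ℝ → ℝ) (x y : ℝ) : Prop :=
  ∀ t ∈ Set.Icc (0:ℝ) 1, (1 - t) * T x + t * T y ≥ T ((1 - t) * x + t * y)

/-- `P z` lies on or below the line through `P x` and `P y`, with the denominator `y - x` cleared. -/
def BelowChord (T : ℝ → ℝ) (x y z : ℝ) : Prop :=
  (y - x) * T z ≤ (y - z) * T x + (z - x) * T y

section BelowChord

variable {T : ℝ → ℝ} {x y z w : ℝ}

theorem sees_iff_forall_belowChord (hxy : x < y) :
    Sees T x y ↔ ∀ z ∈ Set.Icc x y, BelowChord T x y z := by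
  have hpos : 0 < y - x := sub_pos.mpr hxy
  constructor
  · rintro hsees z ⟨hxz, hzy⟩
    have ht : (z - x) / (y - x) ∈ Set.Icc (0:ℝ) 1 :=
      ⟨div_nonneg (by linarith) hpos.le, (div_le_one hpos).mpr (by linarith)⟩
    have h := hsees _ ht
    have hz : (1 - (z - x) / (y - x)) * x + (z - x) / (y - x) * y = z := by
      field_simp; ring
    rw [hz, ge_iff_le] at h
    calc (y - x) * T z
        ≤ (y - x) * ((1 - (z - x) / (y - x)) * T x + (z - x) / (y - x) * T y) := by gcongr
      _ = (y - z) * T x + (z - x) * T y := by field_simp; ring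
  · rintro hchord t ⟨ht0, ht1⟩
    have h := hchord ((1 - t) * x + t * y) ⟨by nlinarith, by nlinarith⟩
    rw [BelowChord] at h
    refine le_of_mul_le_mul_left ?_ hpos
    linarith

theorem BelowChord.trans_left (hxy : x < y) (hxz : x ≤ z) (hxw : x ≤ w)
    (hz : BelowChord T x y z) (hy : BelowChord T x w y) : BelowChord T x w z := by
  unfold BelowChord at *
  refine le_of_mul_le_mul_left ?_ (sub_pos.mpr hxy)
  nlinarith [mul_le_mul_of_nonneg_left hz (sub_nonneg.mpr hxw),
    mul_le_mul_of_nonneg_left hy (sub_nonneg.mpr hxz)]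

theorem BelowChord.trans_right (hyw : y < w) (hzw : z ≤ w) (hxw : x ≤ w)
    (hz : BelowChord T y w z) (hy : BelowChord T x w y) : BelowChord T x w z := by
  unfold BelowChord at *
  refine le_of_mul_le_mul_left ?_ (sub_pos.mpr hyw)
  nlinarith [mul_le_mul_of_nonneg_left hz (sub_nonneg.mpr hxw),
    mul_le_mul_of_nonneg_left hy (sub_nonneg.mpr hzw)]

theorem belowChord_of_crossing {a b c d : ℝ} (hab : a < b) (hbc : b < c) (hcd : c < d)
    (hb : BelowChord T a c b) (hc : BelowChord T b d c) : BelowChord T a d c := by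
  unfold BelowChord at *
  refine le_of_mul_le_mul_left ?_ (sub_pos.mpr hbc)
  nlinarith [mul_le_mul_of_nonneg_left hb (sub_nonneg.mpr hcd.le),
    mul_le_mul_of_nonneg_left hc (sub_nonneg.mpr (hab.trans hbc).le)]

end BelowChord

theorem order_claim (T : ℝ → ℝ) (a b c d : ℝ)
    (hab : a < b) (hbc : b < c) (hcd : c < d)
    (hac : Sees T a c) (hbd : Sees T b d) : Sees T a d := by
  have hac := (sees_iff_forall_belowChord (hab.trans hbc)).mp hac
  have hbd := (sees_iff_forall_belowChord (hbc.trans hcd)).mp hbd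
  have hc : BelowChord T a d c :=
    belowChord_of_crossing hab hbc hcd (hac b ⟨hab.le, hbc.le⟩) (hbd c ⟨hbc.le, hcd.le⟩)
  have hb : BelowChord T a d b :=
    (hac b ⟨hab.le, hbc.le⟩).trans_left (hab.trans hbc) hab.le (by linarith) hc
  rw [sees_iff_forall_belowChord (by linarith)]
  rintro z ⟨haz, hzd⟩
  rcases le_or_gt z c with hzc | hcz
  · exact (hac z ⟨haz, hzc⟩).trans_left (hab.trans hbc) haz (by linarith) hc
  · exact (hbd z ⟨by linarith, hzd⟩).trans_right (hbc.trans hcd) hzd (by linarith) hb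
end

section
/- Let T : ℝ → ℝ be a terrain, and suppose T is affine on [a, b] with a < b. If a point P g with g < a or g > b sees both P p and P q for p, q ∈ [a, b] with p ≤ q, then P g sees P r for every r ∈ [p, q]. (The visible portion of a single edge from any fixed guard is an interval.) -/
/-!
Seen from a guard `g` to the left of the edge, `P g` sees `P r` exactly when no point of the
terrain between them has a larger slope from `g` than `r`. Along an edge lying on the line `L`,
the slope from `g` is `m - D / (r - g)` with `D = T g - L g`. Visibility of `q` from `g` over `p`
forces `D ≥ 0`, so the slope increases along the edge: points of the edge beyond `p` are
dominated by `r` directly, and terrain before `p` is dominated by `p`, hence by `r`. A guard to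
the right is handled by reflecting the terrain.
-/

theorem Sees.comp_neg {T : ℝ → ℝ} {x y : ℝ} (h : Sees T x y) :
    Sees (fun z => T (-z)) (-x) (-y) := by
  intro t ht
  simpa only [neg_neg, show (1 - t) * -x + t * -y = -((1 - t) * x + t * y) by ring] using h t ht

theorem sees_iff_slope_le {T : ℝ → ℝ} {x y : ℝ} (hxy : x < y) :
    Sees T x y ↔ ∀ z ∈ Set.Ioc x y, slope T x z ≤ slope T x y := by
  have hyx : 0 < y - x := sub_pos.mpr hxy
  constructor
  · rintro h z ⟨hxz, hzy⟩
    have hzx : 0 < z - x := sub_pos.mpr hxz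
    set t := (z - x) / (y - x)
    have ht : t * (y - x) = z - x := div_mul_cancel₀ _ hyx.ne'
    have hchord := h t ⟨by positivity, (div_le_one hyx).mpr (by linarith)⟩
    rw [show (1 - t) * x + t * y = z by linear_combination ht] at hchord
    rw [slope_def_field, slope_def_field, div_le_div_iff₀ hzx hyx]
    calc (T z - T x) * (y - x) ≤ t * (T y - T x) * (y - x) :=
          mul_le_mul_of_nonneg_right (by linarith) hyx.le
      _ = (T y - T x) * (z - x) := by linear_combination (T y - T x) * ht
  · intro h t ⟨ht0, ht1⟩
    rcases ht0.eq_or_lt with rfl | htpos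
    · simp
    have hz : (1 - t) * x + t * y - x = t * (y - x) := by ring
    have hslope := h ((1 - t) * x + t * y) ⟨by nlinarith, by nlinarith⟩
    rw [slope_def_field, slope_def_field, hz, div_le_div_iff₀ (by positivity) hyx] at hslope
    nlinarith

theorem slope_eq_of_eq_affine {T : ℝ → ℝ} {g s m c : ℝ} (hs : T s = m * s + c) (hgs : g ≠ s) :
    slope T g s = m - (T g - (m * g + c)) / (s - g) := by
  have : s - g ≠ 0 := sub_ne_zero.mpr hgs.symm
  rw [slope_def_field, hs]
  field_simp
  ring

theorem sees_Icc_of_sees_endpoints {T : ℝ → ℝ} {g p q m c : ℝ}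
    (haff : ∀ x ∈ Set.Icc p q, T x = m * x + c) (hgp : g < p)
    (hsp : Sees T g p) (hsq : Sees T g q) :
    ∀ r ∈ Set.Icc p q, Sees T g r := by
  rintro r ⟨hpr, hrq⟩
  rcases hpr.eq_or_lt with rfl | hpr
  · exact hsp
  have hpq : p < q := hpr.trans_le hrq
  set D := T g - (m * g + c)
  have hslope : ∀ s ∈ Set.Icc p q, slope T g s = m - D / (s - g) := fun s hs =>
    slope_eq_of_eq_affine (haff s hs) (hgp.trans_le hs.1).ne
  have hD : 0 ≤ D := by
    have h := (sees_iff_slope_le (hgp.trans hpq)).mp hsq p ⟨hgp, hpq.le⟩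
    rw [hslope p ⟨le_rfl, hpq.le⟩, hslope q ⟨hpq.le, le_rfl⟩, sub_le_sub_iff_left,
      div_le_div_iff₀ (by linarith) (by linarith)] at h
    nlinarith
  have hmono : MonotoneOn (slope T g) (Set.Icc p q) := fun s hs s' hs' hss' => by
    rw [hslope s hs, hslope s' hs']
    exact sub_le_sub_left (div_le_div_of_nonneg_left hD (by linarith [hs.1]) (by linarith)) m
  have hr : r ∈ Set.Icc p q := ⟨hpr.le, hrq⟩
  rw [sees_iff_slope_le (hgp.trans hpr)]
  rintro z ⟨hgz, hzr⟩
  rcases le_or_gt z p with hzp | hpz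
  · calc slope T g z ≤ slope T g p := (sees_iff_slope_le hgp).mp hsp z ⟨hgz, hzp⟩
      _ ≤ slope T g r := hmono ⟨le_rfl, hpq.le⟩ hr hpr.le
  · exact hmono ⟨hpz.le, hzr.trans hrq⟩ hr hzr

theorem visible_part_of_edge_is_interval_general (T : ℝ → ℝ) (a b g p q : ℝ)
    (haff : ∃ m c : ℝ, ∀ x ∈ Set.Icc a b, T x = m * x + c)
    (hg : g < a ∨ b < g)
    (hp : p ∈ Set.Icc a b) (hq : q ∈ Set.Icc a b)
    (hsp : Sees T g p) (hsq : Sees T g q) :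
    ∀ r ∈ Set.Icc p q, Sees T g r := by
  obtain ⟨m, c, haff⟩ := haff
  have hedge : ∀ x ∈ Set.Icc p q, T x = m * x + c :=
    fun x hx => haff x ⟨hp.1.trans hx.1, hx.2.trans hq.2⟩
  rcases hg with hga | hbg
  · exact sees_Icc_of_sees_endpoints hedge (hga.trans_le hp.1) hsp hsq
  · intro r ⟨hpr, hrq⟩
    have hedge_neg : ∀ x ∈ Set.Icc (-q) (-p), T (-x) = -m * x + c := fun x hx => by
      rw [hedge (-x) ⟨by linarith [hx.2], by linarith [hx.1]⟩]
      ring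
    have h := sees_Icc_of_sees_endpoints (T := fun z => T (-z)) hedge_neg
      (by linarith [hq.2]) hsq.comp_neg hsp.comp_neg (-r) ⟨neg_le_neg hrq, neg_le_neg hpr⟩
    simpa only [neg_neg] using h.comp_neg

theorem visible_part_of_edge_is_interval (T : ℝ → ℝ) (a b g p q : ℝ)
    (hab : a < b)
    (haff : ∃ m c : ℝ, ∀ x ∈ Set.Icc a b, T x = m * x + c)
    (hg : g < a ∨ b < g)
    (hp : p ∈ Set.Icc a b) (hq : q ∈ Set.Icc a b) (hpq : p ≤ q)
    (hsp : Sees T g p) (hsq : Sees T g q) :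
    ∀ r ∈ Set.Icc p q, Sees T g r :=
  visible_part_of_edge_is_interval_general T a b g p q haff hg hp hq hsp hsq
end

section
/- Convex chain argument: Let T : ℝ → ℝ be a terrain and u < g < p real numbers. Suppose T is affine on an interval [e₁, e₂] containing both u and g (with e₁ ≤ u < g ≤ e₂), and suppose P g sees P p with p ≥ e₂ and P p lies on or above the line supporting T on [e₁, e₂]. Then P u sees P p. (Moving a guard along its own edge away from a visible point preserves visibility of that point, provided the point is above the supporting line.) -/
/-! Let `L x = m * x + c`. For a base point `a` on `L`, the chord from `(a, T a)` to `(b, T b)`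
exceeds `L` at `x` by `(x - a) / (b - a)` times the excess `T b - L b`. Once that excess is
nonnegative, moving the base point left along `L` only raises the chord over `[g, p]`, while on
the edge itself `T = L` lies below every such chord. -/

lemma chord_eq_line_add (m c a b y t : ℝ) :
    (1 - t) * (m * a + c) + t * y = m * ((1 - t) * a + t * b) + c + t * (y - (m * b + c)) := by
  ring

theorem sees_iff_of_eq_line {T : ℝ → ℝ} {a b m c : ℝ} (ha : T a = m * a + c) (hab : a < b) :
    Sees T a b ↔
      ∀ x ∈ Set.Icc a b, T x ≤ m * x + c + (x - a) / (b - a) * (T b - (m * b + c)) := by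
  have hba : 0 < b - a := sub_pos.2 hab
  constructor
  · rintro h x ⟨hax, hxb⟩
    set s := (x - a) / (b - a)
    have hs : s ∈ Set.Icc (0 : ℝ) 1 :=
      ⟨div_nonneg (by linarith) hba.le, (div_le_one hba).2 (by linarith)⟩
    have hx : (1 - s) * a + s * b = x := by
      simp only [s]; field_simp; ring
    have hchord := chord_eq_line_add m c a b (T b) s
    have hsee := h s hs
    rw [hx, ha] at hsee
    rw [hx] at hchord
    linarith
  · rintro h t ⟨ht0, ht1⟩
    have hx : (1 - t) * a + t * b ∈ Set.Icc a b := by constructor <;> nlinarith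
    have ht : ((1 - t) * a + t * b - a) / (b - a) = t := by field_simp; ring
    have hle := h _ hx
    rw [ht] at hle
    rw [ha, ge_iff_le, chord_eq_line_add m c a b (T b) t]
    exact hle

lemma div_sub_le_div_sub_of_le {u g x p : ℝ} (hug : u ≤ g) (hgp : g < p) (hxp : x ≤ p) :
    (x - g) / (p - g) ≤ (x - u) / (p - u) := by
  rw [div_le_div_iff₀ (by linarith) (by linarith)]
  nlinarith [mul_le_mul_of_nonneg_left hxp (sub_nonneg.2 hug)]

theorem move_guard_along_edge_general (T : ℝ → ℝ) (u g p e₁ e₂ m c : ℝ)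
    (hug : u < g) (hgp : g < p)
    (he₁u : e₁ ≤ u) (hge₂ : g ≤ e₂)
    (haff : ∀ x ∈ Set.Icc e₁ e₂, T x = m * x + c)
    (hsee : Sees T g p)
    (habove : T p ≥ m * p + c) :
    Sees T u p := by
  have hTu := haff u ⟨he₁u, hug.le.trans hge₂⟩
  have hTg := haff g ⟨he₁u.trans hug.le, hge₂⟩
  have hexcess : 0 ≤ T p - (m * p + c) := sub_nonneg.2 habove
  have hfrom_g := (sees_iff_of_eq_line hTg hgp).1 hsee
  rw [sees_iff_of_eq_line hTu (hug.trans hgp)]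
  rintro x ⟨hux, hxp⟩
  rcases le_or_gt x e₂ with hxe | hxe
  · rw [haff x ⟨he₁u.trans hux, hxe⟩]
    exact le_add_of_nonneg_right
      (mul_nonneg (div_nonneg (by linarith) (by linarith)) hexcess)
  · calc T x ≤ m * x + c + (x - g) / (p - g) * (T p - (m * p + c)) :=
          hfrom_g x ⟨hge₂.trans hxe.le, hxp⟩
      _ ≤ m * x + c + (x - u) / (p - u) * (T p - (m * p + c)) := by
          gcongr _ + ?_ * _
          exact div_sub_le_div_sub_of_le hug.le hgp hxp

theorem move_guard_along_edge (T : ℝ → ℝ) (u g p e₁ e₂ m c : ℝ)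
    (hug : u < g) (hgp : g < p)
    (he₁u : e₁ ≤ u) (hge₂ : g ≤ e₂)
    (haff : ∀ x ∈ Set.Icc e₁ e₂, T x = m * x + c)
    (hpe₂ : p ≥ e₂)
    (hsee : Sees T g p)
    (habove : T p ≥ m * p + c) :
    Sees T u p :=
  move_guard_along_edge_general T u g p e₁ e₂ m c hug hgp he₁u hge₂ haff hsee habove
end

section
/- Let T : ℝ → ℝ be a terrain, g a real number, and suppose T is affine on [e₁, e₂] with e₁ < g < e₂ (g lies in the interior of an edge). Let pₗ < g < p_r and g_r > p_r be such that P g sees P pₗ, P g sees P p_r, P g_r sees P p_r, and suppose T is affine on an interval [f₁, f₂] containing p_r and g lies on or above the line supporting T on that interval while g_r also lies on or above it. If additionally P pₗ and P p_r lie on or above the line supporting T on [e₁, e₂], then P g_r sees P pₗ. (Key step showing a guard interior to an edge cannot be simultaneously a left-guard and a right-guard.) -/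
set_option maxHeartbeats 1600000


theorem no_left_and_right_guard_step (T : ℝ → ℝ)
    (g e₁ e₂ pₗ p_r g_r f₁ f₂ m c m' c' : ℝ)
    (he₁ : e₁ < g) (he₂ : g < e₂)
    (haff : ∀ x ∈ Set.Icc e₁ e₂, T x = m * x + c)
    (hpl : pₗ < g) (hpr : g < p_r) (hgr : p_r < g_r)
    (hspl : Sees T g pₗ) (hspr : Sees T g p_r) (hsgr : Sees T g_r p_r)
    (hprf : p_r ∈ Set.Icc f₁ f₂)
    (haff' : ∀ x ∈ Set.Icc f₁ f₂, T x = m' * x + c')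
    (hg_above : T g ≥ m' * g + c')
    (hgr_above : T g_r ≥ m' * g_r + c')
    (hpl_above : T pₗ ≥ m * pₗ + c)
    (hpr_above : T p_r ≥ m * p_r + c) :
    Sees T g_r pₗ := by
  have hB : T g = m * g + c := haff g ⟨he₁.le, he₂.le⟩
  have hD : T p_r = m' * p_r + c' := haff' p_r hprf
  -- slope inequalities
  have i1 : T g - T pₗ ≤ m * (g - pₗ) := by nlinarith [hpl_above, hB]
  have i2 : m * (p_r - g) ≤ T p_r - T g := by nlinarith [hpr_above, hB]
  have i3 : T p_r - T g ≤ m' * (p_r - g) := by nlinarith [hg_above, hD]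
  have i4 : m' * (g_r - p_r) ≤ T g_r - T p_r := by nlinarith [hgr_above, hD]
  have hmm' : m ≤ m' := by nlinarith [i2, i3]
  -- convexity of the chain: segment pₗ–g_r dominates g and p_r
  have h5 : m * (g_r - g) ≤ T g_r - T g := by
    nlinarith [mul_nonneg (sub_nonneg.2 hmm') (sub_nonneg.2 hgr.le)]
  have h6 : T p_r - T pₗ ≤ m' * (p_r - pₗ) := by
    nlinarith [mul_nonneg (sub_nonneg.2 hmm') (sub_nonneg.2 hpl.le)]
  have c1 : 0 ≤ (g_r - g) * T pₗ + (g - pₗ) * T g_r - (g_r - pₗ) * T g := by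
    nlinarith [mul_le_mul_of_nonneg_left i1 (by linarith : (0:ℝ) ≤ g_r - g),
      mul_le_mul_of_nonneg_left h5 (by linarith : (0:ℝ) ≤ g - pₗ)]
  have c2 : 0 ≤ (g_r - p_r) * T pₗ + (p_r - pₗ) * T g_r - (g_r - pₗ) * T p_r := by
    nlinarith [mul_le_mul_of_nonneg_left h6 (by linarith : (0:ℝ) ≤ g_r - p_r),
      mul_le_mul_of_nonneg_left i4 (by linarith : (0:ℝ) ≤ p_r - pₗ)]
  intro t ht
  obtain ⟨ht0, ht1⟩ := ht
  set x : ℝ := (1 - t) * g_r + t * pₗ with hxdef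
  clear_value x
  have hplgr : pₗ < g_r := by linarith
  have hx1 : pₗ ≤ x := by nlinarith
  have hx2 : x ≤ g_r := by nlinarith
  have hteq : t * (g_r - pₗ) = g_r - x := by rw [hxdef]; ring
  rcases le_total x g with hxg | hxg
  · -- x ∈ [pₗ, g]
    set s : ℝ := (g - x) / (g - pₗ) with hsdef
    clear_value s
    have hden : (0:ℝ) < g - pₗ := by linarith
    have hs0 : 0 ≤ s := by rw [hsdef]; exact div_nonneg (by linarith) hden.le
    have hs1 : s ≤ 1 := by rw [hsdef, div_le_one hden]; linarith
    have hseq : s * (g - pₗ) = g - x := by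
      rw [hsdef]; exact div_mul_cancel₀ _ hden.ne'
    have hpt : (1 - s) * g + s * pₗ = x := by linear_combination -hseq
    have key := hspl s ⟨hs0, hs1⟩
    rw [hpt] at key
    have hid : ((1 - t) * T g_r + t * T pₗ - ((1 - s) * T g + s * T pₗ)) *
        ((g - pₗ) * (g_r - pₗ)) =
        (x - pₗ) * ((g_r - g) * T pₗ + (g - pₗ) * T g_r - (g_r - pₗ) * T g) := by
      linear_combination ((T g - T pₗ) * (g_r - pₗ)) * hseq +
        ((T pₗ - T g_r) * (g - pₗ)) * hteq
    have hP : (0:ℝ) < (g - pₗ) * (g_r - pₗ) := mul_pos hden (by linarith)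
    have hQ : 0 ≤ (x - pₗ) * ((g_r - g) * T pₗ + (g - pₗ) * T g_r - (g_r - pₗ) * T g) :=
      mul_nonneg (by linarith) c1
    have hE := (mul_nonneg_iff_of_pos_right hP).mp (hid.symm ▸ hQ)
    linarith [hE, key]
  · rcases le_total x p_r with hxp | hxp
    · -- x ∈ [g, p_r]
      set s : ℝ := (x - g) / (p_r - g) with hsdef
      clear_value s
      have hden : (0:ℝ) < p_r - g := by linarith
      have hs0 : 0 ≤ s := by rw [hsdef]; exact div_nonneg (by linarith) hden.le
      have hs1 : s ≤ 1 := by rw [hsdef, div_le_one hden]; linarith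
      have hseq : s * (p_r - g) = x - g := by
        rw [hsdef]; exact div_mul_cancel₀ _ hden.ne'
      have hpt : (1 - s) * g + s * p_r = x := by linear_combination hseq
      have key := hspr s ⟨hs0, hs1⟩
      rw [hpt] at key
      have hid : ((1 - t) * T g_r + t * T pₗ - ((1 - s) * T g + s * T p_r)) *
          ((p_r - g) * (g_r - pₗ)) =
          (p_r - x) * ((g_r - g) * T pₗ + (g - pₗ) * T g_r - (g_r - pₗ) * T g) +
          (x - g) * ((g_r - p_r) * T pₗ + (p_r - pₗ) * T g_r - (g_r - pₗ) * T p_r) := by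
        linear_combination ((T g - T p_r) * (g_r - pₗ)) * hseq +
          ((T pₗ - T g_r) * (p_r - g)) * hteq
      have hP : (0:ℝ) < (p_r - g) * (g_r - pₗ) := mul_pos hden (by linarith)
      have hQ : 0 ≤ (p_r - x) * ((g_r - g) * T pₗ + (g - pₗ) * T g_r - (g_r - pₗ) * T g) +
          (x - g) * ((g_r - p_r) * T pₗ + (p_r - pₗ) * T g_r - (g_r - pₗ) * T p_r) := by
        have := mul_nonneg (by linarith : (0:ℝ) ≤ p_r - x) c1
        have := mul_nonneg (by linarith : (0:ℝ) ≤ x - g) c2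
        linarith
      have hE := (mul_nonneg_iff_of_pos_right hP).mp (hid.symm ▸ hQ)
      linarith [hE, key]
    · -- x ∈ [p_r, g_r]
      set s : ℝ := (g_r - x) / (g_r - p_r) with hsdef
      clear_value s
      have hden : (0:ℝ) < g_r - p_r := by linarith
      have hs0 : 0 ≤ s := by rw [hsdef]; exact div_nonneg (by linarith) hden.le
      have hs1 : s ≤ 1 := by rw [hsdef, div_le_one hden]; linarith
      have hseq : s * (g_r - p_r) = g_r - x := by
        rw [hsdef]; exact div_mul_cancel₀ _ hden.ne'
      have hpt : (1 - s) * g_r + s * p_r = x := by linear_combination -hseq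
      have key := hsgr s ⟨hs0, hs1⟩
      rw [hpt] at key
      have hid : ((1 - t) * T g_r + t * T pₗ - ((1 - s) * T g_r + s * T p_r)) *
          ((g_r - p_r) * (g_r - pₗ)) =
          (g_r - x) * ((g_r - p_r) * T pₗ + (p_r - pₗ) * T g_r - (g_r - pₗ) * T p_r) := by
        linear_combination ((T g_r - T p_r) * (g_r - pₗ)) * hseq +
          ((T pₗ - T g_r) * (g_r - p_r)) * hteq
      have hP : (0:ℝ) < (g_r - p_r) * (g_r - pₗ) := mul_pos hden (by linarith)
      have hQ : 0 ≤ (g_r - x) * ((g_r - p_r) * T pₗ + (p_r - pₗ) * T g_r - (g_r - pₗ) * T p_r) :=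
        mul_nonneg (by linarith) c2
      have hE := (mul_nonneg_iff_of_pos_right hP).mp (hid.symm ▸ hQ)
      linarith [hE, key]
end

section
/- Transitivity along a line: Let T : ℝ → ℝ be a terrain and a < b < c real numbers such that P b lies on the segment from P a to P c (i.e., T b = ((c-b)·T a + (b-a)·T c)/(c-a)). If P a sees P b and P b sees P c, then P a sees P c. -/
theorem sees_trans_along_line (T : ℝ → ℝ) (a b c : ℝ)
    (hab : a < b) (hbc : b < c)
    (hline : T b = ((c - b) * T a + (b - a) * T c) / (c - a))
    (h1 : Sees T a b) (h2 : Sees T b c) : Sees T a c := by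
  intro t ht
  obtain ⟨ht0, ht1⟩ := ht
  have hac : (0:ℝ) < c - a := by linarith
  have hba : (0:ℝ) < b - a := by linarith
  have hcb : (0:ℝ) < c - b := by linarith
  have hTb : T b * (c - a) = (c - b) * T a + (b - a) * T c := by
    rw [hline]; field_simp
  by_cases hcase : t * (c - a) ≤ b - a
  · set s := t * (c - a) / (b - a) with hs
    have hsb : s * (b - a) = t * (c - a) := by
      rw [hs]; field_simp
    have hs0 : 0 ≤ s := div_nonneg (mul_nonneg ht0 hac.le) hba.le
    have hs1 : s ≤ 1 := by rw [hs, div_le_one hba]; linarith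
    have key := h1 s ⟨hs0, hs1⟩
    have hpt : (1 - s) * a + s * b = (1 - t) * a + t * c := by
      linear_combination hsb
    rw [hpt] at key
    have h3 : ((1 - s) * T a + s * T b) * (c - a)
        = ((1 - t) * T a + t * T c) * (c - a) := by
      linear_combination s * hTb + (T c - T a) * hsb
    have hval : (1 - s) * T a + s * T b = (1 - t) * T a + t * T c :=
      mul_right_cancel₀ hac.ne' h3
    linarith [key]
  · push_neg at hcase
    set s := (t * (c - a) - (b - a)) / (c - b) with hs
    have hsb : s * (c - b) = t * (c - a) - (b - a) := by
      rw [hs]; field_simp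
    have hs0 : 0 ≤ s := div_nonneg (by linarith) hcb.le
    have hs1 : s ≤ 1 := by
      rw [hs, div_le_one hcb]
      nlinarith [mul_le_of_le_one_left hac.le ht1]
    have key := h2 s ⟨hs0, hs1⟩
    have hpt : (1 - s) * b + s * c = (1 - t) * a + t * c := by
      linear_combination hsb
    rw [hpt] at key
    have h3 : ((1 - s) * T b + s * T c) * (c - a)
        = ((1 - t) * T a + t * T c) * (c - a) := by
      linear_combination (1 - s) * hTb + (T c - T a) * hsb
    have hval : (1 - s) * T b + s * T c = (1 - t) * T a + t * T c :=
      mul_right_cancel₀ hac.ne' h3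
    linarith [key]
end

section
/- If a guard P g with g < a sees both endpoints P a and P b of an interval [a, b] on which T is affine, then P g sees every point P c with c ∈ [a, b]. (A guard covering both endpoints of an edge covers the entire edge.) -/
/-!
The guard lies on or above the line carrying the edge: otherwise the line of sight from `P g`
to `P b` would pass strictly below `P a`. Then for `c ∈ [a, b]` the segment from `P g` to `P c`
stays above the edge on `[a, c]`, and on `[g, a]` it lies above the segment from `P g` to `P a`,
which already clears the terrain.
-/

open Set

theorem sees_iff_mul_le {T : ℝ → ℝ} {x y : ℝ} (hxy : x < y) :
    Sees T x y ↔ ∀ z ∈ Icc x y, (y - x) * T z ≤ (y - z) * T x + (z - x) * T y := by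
  have hyx : 0 < y - x := sub_pos.mpr hxy
  constructor
  · rintro hsees z ⟨hxz, hzy⟩
    have ht : (z - x) / (y - x) ∈ Icc (0 : ℝ) 1 :=
      ⟨div_nonneg (by linarith) hyx.le, (div_le_one hyx).mpr (by linarith)⟩
    have h := hsees _ ht
    have hpt : (1 - (z - x) / (y - x)) * x + (z - x) / (y - x) * y = z := by
      field_simp; ring
    rw [hpt, ge_iff_le] at h
    calc (y - x) * T z
        ≤ (y - x) * ((1 - (z - x) / (y - x)) * T x + (z - x) / (y - x) * T y) :=
          mul_le_mul_of_nonneg_left h hyx.le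
      _ = (y - z) * T x + (z - x) * T y := by field_simp; ring
  · rintro hmul t ⟨ht0, ht1⟩
    have h := hmul ((1 - t) * x + t * y) ⟨by nlinarith, by nlinarith⟩
    refine le_of_mul_le_mul_left ?_ hyx
    linarith [show (y - ((1 - t) * x + t * y)) = (1 - t) * (y - x) by ring,
      show ((1 - t) * x + t * y - x) = t * (y - x) by ring]

variable {T : ℝ → ℝ} {m k g a b c : ℝ}

theorem line_le_of_sees (hga : g < a) (hab : a < b) (hTa : T a = m * a + k)
    (hTb : T b = m * b + k) (hsb : Sees T g b) : m * g + k ≤ T g := by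
  have h := (sees_iff_mul_le (hga.trans hab)).1 hsb a ⟨hga.le, hab.le⟩
  rw [hTa, hTb] at h
  refine le_of_mul_le_mul_left ?_ (sub_pos.mpr hab)
  linarith

theorem sees_of_sees_of_line_le (hga : g < a) (hac : a ≤ c)
    (haff : ∀ x ∈ Icc a c, T x = m * x + k) (hline : m * g + k ≤ T g) (hsa : Sees T g a) :
    Sees T g c := by
  rw [sees_iff_mul_le (hga.trans_le hac)]
  rintro z ⟨hgz, hzc⟩
  rw [haff c ⟨hac, le_rfl⟩]
  rcases le_total a z with haz | hza
  · rw [haff z ⟨haz, hzc⟩]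
    linarith [mul_le_mul_of_nonneg_left hline (sub_nonneg.mpr hzc)]
  · have h := (sees_iff_mul_le hga).1 hsa z ⟨hgz, hza⟩
    rw [haff a ⟨le_rfl, hac⟩] at h
    refine le_of_mul_le_mul_left ?_ (sub_pos.mpr hga)
    -- the slack is `(c - a) * (z - g) * (T g - (m * g + k))`
    linarith [mul_le_mul_of_nonneg_left h (by linarith : (0 : ℝ) ≤ c - g),
      mul_nonneg (mul_nonneg (sub_nonneg.mpr hac) (sub_nonneg.mpr hgz)) (sub_nonneg.mpr hline)]

theorem guard_sees_whole_edge (T : ℝ → ℝ) (g a b : ℝ)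
    (hga : g < a) (hab : a < b)
    (haff : ∃ m c : ℝ, ∀ x ∈ Set.Icc a b, T x = m * x + c)
    (hsa : Sees T g a) (hsb : Sees T g b) :
    ∀ c ∈ Set.Icc a b, Sees T g c := by
  obtain ⟨m, k, hmk⟩ := haff
  have hline : m * g + k ≤ T g :=
    line_le_of_sees hga hab (hmk a ⟨le_rfl, hab.le⟩) (hmk b ⟨hab.le, le_rfl⟩) hsb
  rintro c ⟨hac, hcb⟩
  exact sees_of_sees_of_line_le hga hac (fun x hx => hmk x ⟨hx.1, hx.2.trans hcb⟩) hline hsa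
end

section
/- Uniqueness of the left-guard under the order claim: Let sees be a relation on ℝ satisfying the order claim (a < b < c < d, sees a c, sees b d implies sees a d), let C ⊆ ℝ be finite, and let e = [v, v'] be an interval. Suppose g₁, g₂ ∈ C with g₁ < g₂ < v are both left-guards of e, i.e. there exist p₁, p₂ ∈ [v, v'] such that g₁ is the unique element of C seeing p₁ and g₂ is the unique element of C seeing p₂. Suppose additionally that each guard's visible portion of e is an interval containing v'. Then this is a contradiction, i.e., at most one left-guard of e can exist. -/
theorem left_guard_unique (sees : ℝ → ℝ → Prop)
    (horder : ∀ a b c d : ℝ, a < b → b < c → c < d →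
      sees a c → sees b d → sees a d)
    (C : Finset ℝ) (v v' : ℝ) (hvv : v ≤ v')
    (hint : ∀ g ∈ C, g < v → ∀ p ∈ Set.Icc v v', sees g p →
      ∀ q, p ≤ q → q ≤ v' → sees g q)
    (g₁ g₂ : ℝ) (hg₁ : g₁ ∈ C) (hg₂ : g₂ ∈ C)
    (h12 : g₁ < g₂) (h2v : g₂ < v)
    (hleft₁ : ∃ p₁ ∈ Set.Icc v v', sees g₁ p₁ ∧ ∀ c ∈ C, sees c p₁ → c = g₁)
    (hleft₂ : ∃ p₂ ∈ Set.Icc v v', sees g₂ p₂ ∧ ∀ c ∈ C, sees c p₂ → c = g₂) :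
    False := by
  obtain ⟨p₁, hp₁, hs₁, hu₁⟩ := hleft₁
  obtain ⟨p₂, hp₂, hs₂, hu₂⟩ := hleft₂
  rcases le_total p₁ p₂ with h | h
  · have := hint g₁ hg₁ (h12.trans h2v) p₁ hp₁ hs₁ p₂ h hp₂.2
    exact absurd (hu₂ g₁ hg₁ this) (ne_of_lt h12)
  · have := hint g₂ hg₂ h2v p₂ hp₂ hs₂ p₁ h hp₁.2
    exact absurd (hu₁ g₂ hg₂ this) (ne_of_gt h12)
end
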